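/- For any graphs G and H, DOM(G □ H) ≥ max{DOM(G)·α(H), α(G)·DOM(H)}. -/

import Mathlib

open SimpleGraph

variable {V : Type*}

/-- `D` is an orientation of the simple graph `G`: arcs only along edges, and each edge
gets exactly one of its two possible directions. -/
def IsOrientation (G : SimpleGraph V) (D : V → V → Prop) : Prop :=
  (∀ u v, D u v → G.Adj u v) ∧ (∀ u v, G.Adj u v → (D u v ↔ ¬ D v u))

/-- `S` is a dominating set of the digraph `D`. -/
def IsDomSet (D : V → V → Prop) (S : Finset V) : Prop :=
  ∀ v, v ∉ S → ∃ u ∈ S, D u v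

/-- Domination number of a digraph. -/
noncomputable def domNum (D : V → V → Prop) : ℕ :=
  sInf {n | ∃ S : Finset V, S.card = n ∧ IsDomSet D S}

/-- Orientable domination number of a graph. -/
noncomputable def DOM (G : SimpleGraph V) : ℕ :=
  sSup {n | ∃ D : V → V → Prop, IsOrientation G D ∧ domNum D = n}

/-- Independence number. -/
noncomputable def indepNum (G : SimpleGraph V) : ℕ :=
  sSup {n | ∃ S : Finset V, S.card = n ∧ ∀ u ∈ S, ∀ v ∈ S, ¬ G.Adj u v}

/-- Matching number. -/
noncomputable def matchNum (G : SimpleGraph V) : ℕ :=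
  sSup {n | ∃ M : Finset (Sym2 V), M.card = n ∧ (∀ e ∈ M, e ∈ G.edgeSet) ∧
    ∀ e ∈ M, ∀ f ∈ M, e ≠ f → ∀ v, v ∈ e → v ∉ f}

/-- Maximum order of a bipartite induced subgraph. -/
noncomputable def bipNum (G : SimpleGraph V) : ℕ :=
  sSup {n | ∃ s : Finset V, s.card = n ∧ (G.induce (s : Set V)).Colorable 2}

/-- Join of `G` with a single universal vertex (`none`). -/
def joinK1 (G : SimpleGraph V) : SimpleGraph (Option V) :=
  SimpleGraph.fromRel (fun a b => a = none ∨ ∃ u v, a = some u ∧ b = some v ∧ G.Adj u v)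

/-- Lexicographic product `G ∘ H`. -/
def lexProd {W : Type*} (G : SimpleGraph V) (H : SimpleGraph W) : SimpleGraph (V × W) :=
  SimpleGraph.fromRel (fun a b => G.Adj a.1 b.1 ∨ (a.1 = b.1 ∧ H.Adj a.2 b.2))

/-- Corona `G ⊙ H`: vertex `(u, none)` is the vertex `u` of `G`, the vertices `(u, some w)`
form the copy of `H` joined to `u`. -/
def corona {W : Type*} (G : SimpleGraph V) (H : SimpleGraph W) : SimpleGraph (V × Option W) :=
  SimpleGraph.fromRel (fun a b =>
    (a.2 = none ∧ b.2 = none ∧ G.Adj a.1 b.1) ∨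
    (a.1 = b.1 ∧ ∃ w w', a.2 = some w ∧ b.2 = some w' ∧ H.Adj w w') ∨
    (a.1 = b.1 ∧ a.2 = none ∧ b.2 ≠ none))

/-- A digraph is acyclic if it has no directed cycle. -/
def DigraphAcyclic (D : V → V → Prop) : Prop :=
  ¬ ∃ (m : ℕ) (c : ℕ → V), 0 < m ∧ (∀ i < m, D (c i) (c (i + 1))) ∧ c m = c 0

/-- A packing of a digraph: no arc joins two of its vertices and no vertex has two
out-neighbors in it. -/
def IsPacking (D : V → V → Prop) (P : Finset V) : Prop :=
  (∀ u ∈ P, ∀ v ∈ P, ¬ D u v) ∧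
  (∀ u ∈ P, ∀ v ∈ P, u ≠ v → ∀ w, ¬ (D w u ∧ D w v))

/-- Packing number of a digraph. -/
noncomputable def packNum (D : V → V → Prop) : ℕ :=
  sSup {n | ∃ P : Finset V, P.card = n ∧ IsPacking D P}

/-!
Orient `G` so as to attain `DOM G`, and orient `H` so that every edge at a maximum independent
set `A` points away from `A`. In the product orientation a vertex `(v, a)` with `a ∈ A` has
in-arcs only inside its layer `G × {a}`, so any dominating set meets each of these `α(H)` layers
in a dominating set of the orientation of `G`. The other bound follows from `G □ H ≅ H □ G`.
-/

section Orientation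

variable {V V' W : Type*}

lemma exists_isOrientation (G : SimpleGraph V) : ∃ D, IsOrientation G D := by
  refine ⟨fun u v => G.Adj u v ∧ WellOrderingRel u v, fun u v h => h.1, fun u v hadj => ?_⟩
  refine ⟨fun ⟨_, huv⟩ ⟨_, hvu⟩ => asymm huv hvu, fun h => ⟨hadj, ?_⟩⟩
  rcases trichotomous_of WellOrderingRel u v with huv | rfl | hvu
  · exact huv
  · exact (hadj.ne rfl).elim
  · exact absurd ⟨hadj.symm, hvu⟩ h

lemma exists_isOrientation_no_arc_into (H : SimpleGraph W) (A : Finset W)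
    (hA : ∀ a ∈ A, ∀ b ∈ A, ¬ H.Adj a b) :
    ∃ D, IsOrientation H D ∧ ∀ a ∈ A, ∀ b, ¬ D b a := by
  obtain ⟨E, -, hE⟩ := exists_isOrientation H
  refine ⟨fun a b => H.Adj a b ∧ (a ∈ A ∨ (b ∉ A ∧ E a b)), ⟨fun a b h => h.1, ?_⟩, ?_⟩
  · intro a b hab
    have hE := hE a b hab
    have hab' := hab.symm
    have hAa := hA a
    have hAb := hA b
    tauto
  · rintro a ha b ⟨hba, hb | ⟨hna, -⟩⟩
    exacts [hA b hb a ha hba, hna ha]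

lemma IsOrientation.map {G : SimpleGraph V} {G' : SimpleGraph V'} {D : V → V → Prop}
    (hD : IsOrientation G D) (e : G ≃g G') :
    IsOrientation G' (fun u v => D (e.symm u) (e.symm v)) :=
  ⟨fun u v h => by simpa using e.map_rel_iff.mpr (hD.1 _ _ h),
    fun u v h => hD.2 _ _ (e.symm.map_rel_iff.mpr h)⟩

def boxProdRel (DG : V → V → Prop) (DH : W → W → Prop) (p q : V × W) : Prop :=
  (p.2 = q.2 ∧ DG p.1 q.1) ∨ (p.1 = q.1 ∧ DH p.2 q.2)

lemma IsOrientation.boxProdRel {G : SimpleGraph V} {H : SimpleGraph W} {DG : V → V → Prop}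
    {DH : W → W → Prop} (hG : IsOrientation G DG) (hH : IsOrientation H DH) :
    IsOrientation (G □ H) (_root_.boxProdRel DG DH) := by
  refine ⟨?_, fun p q hpq => ?_⟩
  · rintro p q (⟨h2, hD⟩ | ⟨h1, hD⟩)
    exacts [boxProd_adj.2 (Or.inl ⟨hG.1 _ _ hD, h2⟩), boxProd_adj.2 (Or.inr ⟨hH.1 _ _ hD, h1⟩)]
  rcases boxProd_adj.1 hpq with ⟨hG', h2⟩ | ⟨hH', h1⟩
  · have := hG.2 _ _ hG'
    have := hG'.ne
    simp only [_root_.boxProdRel, h2]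
    tauto
  · have := hH.2 _ _ hH'
    have := hH'.ne
    simp only [_root_.boxProdRel, h1]
    tauto

end Orientation

section Domination

variable {V V' W : Type*}

lemma domNum_le_card (D : V → V → Prop) {S : Finset V} (hS : IsDomSet D S) :
    domNum D ≤ S.card :=
  Nat.sInf_le ⟨S, rfl, hS⟩

lemma exists_isDomSet_card_eq_domNum [Fintype V] (D : V → V → Prop) :
    ∃ S : Finset V, S.card = domNum D ∧ IsDomSet D S :=
  Nat.sInf_mem (s := {n | ∃ S : Finset V, S.card = n ∧ IsDomSet D S})
    ⟨_, Finset.univ, rfl, fun v hv => absurd (Finset.mem_univ v) hv⟩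

lemma domNum_le_card_univ [Fintype V] (D : V → V → Prop) : domNum D ≤ Fintype.card V :=
  domNum_le_card D (S := Finset.univ) fun v hv => absurd (Finset.mem_univ v) hv

lemma domNum_comap_le [Fintype V'] (e : V ≃ V') (D : V' → V' → Prop) :
    domNum (fun u v => D (e u) (e v)) ≤ domNum D := by
  obtain ⟨S, hcard, hS⟩ := exists_isDomSet_card_eq_domNum D
  refine (domNum_le_card _ (S := S.map e.symm.toEmbedding) fun v hv => ?_).trans
    (by rw [Finset.card_map, hcard])
  obtain ⟨u, hu, huv⟩ := hS (e v) fun h => hv (Finset.mem_map_equiv.2 (by simpa using h))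
  exact ⟨e.symm u, Finset.mem_map_of_mem _ hu, by simpa using huv⟩

lemma domNum_le_card_filter_snd_eq [DecidableEq W] {DG : V → V → Prop} {DH : W → W → Prop}
    {S : Finset (V × W)} (hS : IsDomSet (boxProdRel DG DH) S) {b : W} (hb : ∀ w, ¬ DH w b) :
    domNum DG ≤ (S.filter (fun p => p.2 = b)).card := by
  classical
  refine (domNum_le_card DG (S := (S.filter (fun p => p.2 = b)).image Prod.fst)
    fun v hv => ?_).trans Finset.card_image_le
  have hvb : (v, b) ∉ S := fun h => hv (Finset.mem_image.2 ⟨_, Finset.mem_filter.2 ⟨h, rfl⟩, rfl⟩)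
  obtain ⟨q, hq, ⟨hqb, hqv⟩ | ⟨-, hDH⟩⟩ := hS _ hvb
  · exact ⟨q.1, Finset.mem_image.2 ⟨q, Finset.mem_filter.2 ⟨hq, hqb⟩, rfl⟩, hqv⟩
  · exact absurd hDH (hb _)

lemma domNum_mul_card_le_domNum_boxProdRel [Fintype V] [Fintype W] (DG : V → V → Prop)
    {DH : W → W → Prop} {A : Finset W} (hA : ∀ a ∈ A, ∀ w, ¬ DH w a) :
    domNum DG * A.card ≤ domNum (boxProdRel DG DH) := by
  classical
  obtain ⟨S, hcard, hS⟩ := exists_isDomSet_card_eq_domNum (boxProdRel DG DH)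
  calc domNum DG * A.card = ∑ _a ∈ A, domNum DG := by rw [Finset.sum_const, smul_eq_mul, mul_comm]
    _ ≤ ∑ a ∈ A, (S.filter (fun p => p.2 = a)).card :=
      Finset.sum_le_sum fun a ha => domNum_le_card_filter_snd_eq hS (hA a ha)
    _ = (S.filter (fun p => p.2 ∈ A)).card := Finset.sum_card_fiberwise_eq_card_filter _ _ _
    _ ≤ domNum (boxProdRel DG DH) := hcard ▸ Finset.card_filter_le _ _

end Domination

section DOM

variable {V V' W : Type*} [Fintype V]

lemma bddAbove_domNum_of_isOrientation (G : SimpleGraph V) :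
    BddAbove {n | ∃ D : V → V → Prop, IsOrientation G D ∧ domNum D = n} :=
  ⟨Fintype.card V, by rintro _ ⟨D, -, rfl⟩; exact domNum_le_card_univ D⟩

lemma domNum_le_DOM {G : SimpleGraph V} {D : V → V → Prop} (hD : IsOrientation G D) :
    domNum D ≤ DOM G :=
  le_csSup (bddAbove_domNum_of_isOrientation G) ⟨D, hD, rfl⟩

lemma exists_isOrientation_domNum_eq_DOM (G : SimpleGraph V) :
    ∃ D, IsOrientation G D ∧ domNum D = DOM G := by
  obtain ⟨D, hD⟩ := exists_isOrientation G
  exact Nat.sSup_mem (s := {n | ∃ D : V → V → Prop, IsOrientation G D ∧ domNum D = n})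
    ⟨_, D, hD, rfl⟩ (bddAbove_domNum_of_isOrientation G)

lemma exists_indep_card_eq_indepNum (G : SimpleGraph V) :
    ∃ S : Finset V, S.card = _root_.indepNum G ∧ ∀ u ∈ S, ∀ v ∈ S, ¬ G.Adj u v :=
  Nat.sSup_mem (s := {n | ∃ S : Finset V, S.card = n ∧ ∀ u ∈ S, ∀ v ∈ S, ¬ G.Adj u v})
    ⟨0, ∅, rfl, by simp⟩ ⟨Fintype.card V, by rintro _ ⟨S, rfl, -⟩; exact S.card_le_univ⟩

lemma DOM_le_of_iso [Fintype V'] {G : SimpleGraph V} {G' : SimpleGraph V'} (e : G ≃g G') :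
    DOM G ≤ DOM G' := by
  obtain ⟨D, hD, hDOM⟩ := exists_isOrientation_domNum_eq_DOM G
  calc DOM G = domNum (fun u v => D (e.symm (e u)) (e.symm (e v))) := by simpa using hDOM.symm
    _ ≤ domNum (fun u v => D (e.symm u) (e.symm v)) :=
      domNum_comap_le e.toEquiv fun u v => D (e.symm u) (e.symm v)
    _ ≤ DOM G' := domNum_le_DOM (hD.map e)

lemma DOM_mul_indepNum_le_DOM_boxProd [Fintype W] (G : SimpleGraph V) (H : SimpleGraph W) :
    DOM G * _root_.indepNum H ≤ DOM (G □ H) := by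
  obtain ⟨DG, hDG, hDOM⟩ := exists_isOrientation_domNum_eq_DOM G
  obtain ⟨A, hcard, hA⟩ := exists_indep_card_eq_indepNum H
  obtain ⟨DH, hDH, hin⟩ := exists_isOrientation_no_arc_into H A hA
  calc DOM G * _root_.indepNum H = domNum DG * A.card := by rw [hDOM, hcard]
    _ ≤ domNum (boxProdRel DG DH) := domNum_mul_card_le_domNum_boxProdRel DG hin
    _ ≤ DOM (G □ H) := domNum_le_DOM (hDG.boxProdRel hDH)

end DOM

theorem stmt10 {V W : Type*} [Fintype V] [Fintype W]
    (G : SimpleGraph V) (H : SimpleGraph W) :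
    max (DOM G * _root_.indepNum H) (_root_.indepNum G * DOM H) ≤ DOM (G □ H) := by
  refine max_le (DOM_mul_indepNum_le_DOM_boxProd G H) ?_
  rw [mul_comm]
  exact (DOM_mul_indepNum_le_DOM_boxProd H G).trans (DOM_le_of_iso (boxProdComm H G))
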